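/- arXiv:2605.00009 — 4 statements merged into one kernel-verified Lean document; each statement's English description precedes it below -/
import Mathlib

section
/- Let f, g : α → ℝ be integrable functions on a measure space (α, μ). Then ∫ (1/2)·[f·(sign(f+g) − sign f) + g·(sign(f+g) − sign g)] dμ = 0 if and only if ‖f+g‖_{L¹} = ‖f‖_{L¹} + ‖g‖_{L¹}. (Pythagorean theorem in L¹: the weak inner product vanishes iff the L¹ norms add.) -/
/-! Since `t · sign t = |t|`, the integrand of the weak inner product is pointwise
`(|f + g| - |f| - |g|) / 2`, so the weak inner product is half the defect
`‖f + g‖₁ - ‖f‖₁ - ‖g‖₁` of the triangle inequality. -/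

open MeasureTheory

namespace Real

theorem self_mul_sign (x : ℝ) : x * sign x = |x| := by
  rcases lt_trichotomy x 0 with hx | rfl | hx
  · rw [sign_of_neg hx, abs_of_neg hx, mul_neg_one]
  · simp
  · rw [sign_of_pos hx, abs_of_pos hx, mul_one]

theorem mul_sign_add_sub_add_mul_sign_add_sub (x y : ℝ) :
    x * (sign (x + y) - sign x) + y * (sign (x + y) - sign y) = |x + y| - |x| - |y| := by
  linear_combination self_mul_sign (x + y) - self_mul_sign x - self_mul_sign y

end Real

theorem integral_half_mul_sign_add_sub {α : Type*} [MeasurableSpace α] {μ : Measure α}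
    {f g : α → ℝ} (hf : Integrable f μ) (hg : Integrable g μ) :
    ∫ x, (1/2) * (f x * (Real.sign (f x + g x) - Real.sign (f x))
      + g x * (Real.sign (f x + g x) - Real.sign (g x))) ∂μ
      = (1/2) * ((∫ x, |f x + g x| ∂μ) - (∫ x, |f x| ∂μ) - (∫ x, |g x| ∂μ)) := by
  have hfg : Integrable (fun x ↦ |f x + g x|) μ := (hf.add hg).abs
  simp_rw [Real.mul_sign_add_sub_add_mul_sign_add_sub]
  rw [integral_const_mul, integral_sub _ hg.abs, integral_sub hfg hf.abs]
  exact hfg.sub hf.abs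

theorem pythagorean_L1 {α : Type*} [MeasurableSpace α] (μ : Measure α)
    (f g : α → ℝ) (hf : Integrable f μ) (hg : Integrable g μ) :
    (∫ x, (1/2) * (f x * (Real.sign (f x + g x) - Real.sign (f x))
      + g x * (Real.sign (f x + g x) - Real.sign (g x))) ∂μ) = 0 ↔
    (∫ x, |f x + g x| ∂μ) = (∫ x, |f x| ∂μ) + (∫ x, |g x| ∂μ) := by
  rw [integral_half_mul_sign_add_sub hf hg, mul_eq_zero, sub_sub, sub_eq_zero]
  norm_num
end

section
/- Let f, g : α → ℝ be integrable on a measure space μ. Then ‖f+g‖_{L¹(μ)} = ‖f‖_{L¹(μ)} + ‖g‖_{L¹(μ)} if and only if f(x)·g(x) ≥ 0 for μ-almost every x. -/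
open MeasureTheory

/- The triangle inequality `|f + g| ≤ |f| + |g|` holds pointwise, so equality of the integrals
forces pointwise equality almost everywhere, and `|a + b| = |a| + |b|` says exactly that `a` and
`b` do not have strictly opposite signs. -/

theorem abs_add_eq_abs_add_abs_iff_mul_nonneg {R : Type*} [Ring R] [LinearOrder R]
    [IsStrictOrderedRing R] (a b : R) : |a + b| = |a| + |b| ↔ 0 ≤ a * b :=
  (abs_add_eq_add_abs_iff a b).trans mul_nonneg_iff.symm

theorem L1_norm_add_eq_iff_same_sign {α : Type*} [MeasurableSpace α] (μ : Measure α)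
    (f g : α → ℝ) (hf : Integrable f μ) (hg : Integrable g μ) :
    (∫ x, |f x + g x| ∂μ) = (∫ x, |f x| ∂μ) + (∫ x, |g x| ∂μ) ↔
    ∀ᵐ x ∂μ, 0 ≤ f x * g x := by
  have h_lhs : Integrable (fun x => |f x + g x|) μ := (hf.add hg).abs
  have h_rhs : Integrable (fun x => |f x| + |g x|) μ := hf.abs.add hg.abs
  rw [← integral_add hf.abs hg.abs,
    integral_eq_iff_of_ae_le h_lhs h_rhs (ae_of_all μ fun x => abs_add_le (f x) (g x))]
  exact Filter.eventually_congr
    (ae_of_all μ fun x => abs_add_eq_abs_add_abs_iff_mul_nonneg (f x) (g x))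
end

section
/- Let p > 1, ψ ∈ ℝ, and n ≥ 2 a natural number. The function φ(c) = (n−1)·|ψ − c|^p + |c|^p on ℝ attains its unique minimum at c = ψ·(n−1)^{1/(p−1)} / (1 + (n−1)^{1/(p−1)}). -/
/-!
Write `g x = |x| ^ (p - 2) * x`, so that `p * g` is the derivative of `|x| ^ p`. Since `g` is
strictly increasing, `|x| ^ p` is strictly convex, hence so is `φ`, and the unique minimiser of `φ`
is its critical point, i.e. the solution of `g c = (n - 1) * g (ψ - c)`. As `g (r * x) =
r ^ (p - 1) * g x` for `r > 0`, this equation is solved by `c = r * (ψ - c)` with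
`r = (n - 1) ^ (1 / (p - 1))`, which is the stated `c`.
-/

open Real Set

lemma strictMono_abs_rpow_sub_two_mul_self {p : ℝ} (hp : 1 < p) :
    StrictMono fun x : ℝ => |x| ^ (p - 2) * x := by
  refine strictMono_of_odd_strictMonoOn_nonneg (fun x => by simp only [abs_neg, mul_neg]) ?_
  refine (strictMonoOn_rpow_Ici_of_exponent_pos (by linarith : 0 < p - 1)).congr fun x hx => ?_
  rw [abs_of_nonneg (mem_Ici.mp hx)]
  rcases (mem_Ici.mp hx).eq_or_lt with rfl | hx
  · simp [zero_rpow (by linarith : p - 1 ≠ 0)]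
  · rw [← rpow_add_one hx.ne']; ring_nf

lemma strictConvexOn_abs_rpow {p : ℝ} (hp : 1 < p) :
    StrictConvexOn ℝ univ fun x : ℝ => |x| ^ p := by
  have hderiv : deriv (fun x : ℝ => |x| ^ p) = fun x => p * (|x| ^ (p - 2) * x) := by
    ext x; rw [(hasDerivAt_abs_rpow x hp).deriv, mul_assoc]
  refine StrictMonoOn.strictConvexOn_of_deriv convex_univ
    (continuous_abs.rpow_const fun _ => Or.inr (by linarith)).continuousOn ?_
  rw [hderiv]
  exact ((strictMono_abs_rpow_sub_two_mul_self hp).const_mul (by linarith)).strictMonoOn _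

lemma StrictConvexOn.lt_of_hasDerivAt_eq_zero {S : Set ℝ} {f : ℝ → ℝ} {x y : ℝ}
    (hf : StrictConvexOn ℝ S f) (hx : x ∈ S) (hy : y ∈ S) (hf' : HasDerivAt f 0 x)
    (hyx : y ≠ x) : f x < f y := by
  rcases hyx.lt_or_gt with hlt | hlt
  · have := hf.slope_lt_of_hasDerivAt hy hx hlt hf'
    rw [slope_def_field, div_neg_iff] at this
    rcases this with ⟨_, h⟩ | ⟨h, _⟩ <;> linarith
  · have := hf.lt_slope_of_hasDerivAt hx hy hlt hf'
    rw [slope_def_field, div_pos_iff] at this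
    rcases this with ⟨h, _⟩ | ⟨_, h⟩ <;> linarith

lemma abs_mul_rpow_sub_two_mul_mul {r : ℝ} (hr : 0 < r) (p x : ℝ) :
    |r * x| ^ (p - 2) * (r * x) = r ^ (p - 1) * (|x| ^ (p - 2) * x) := by
  rw [abs_mul, abs_of_pos hr, mul_rpow hr.le (abs_nonneg x),
    show p - 1 = p - 2 + 1 by ring, rpow_add_one hr.ne']
  ring

section Weighted

variable {p m ψ : ℝ}

lemma strictConvexOn_weighted_abs_rpow (hp : 1 < p) (hm : 0 ≤ m) :
    StrictConvexOn ℝ univ fun c : ℝ => m * |ψ - c| ^ p + |c| ^ p := by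
  have hconv : ConvexOn ℝ univ fun c : ℝ => |ψ - c| ^ p := by
    have hcomp : (fun c : ℝ => |ψ - c| ^ p) = (fun x : ℝ => |x| ^ p) ∘ fun c => -ψ + c := by
      ext c
      rw [Function.comp_apply, abs_sub_comm, neg_add_eq_sub]
    rw [hcomp, ← preimage_univ]
    exact (strictConvexOn_abs_rpow hp).convexOn.translate_right (-ψ)
  exact (hconv.smul hm).add_strictConvexOn (strictConvexOn_abs_rpow hp)

lemma hasDerivAt_weighted_abs_rpow (hp : 1 < p) (c : ℝ) :
    HasDerivAt (fun c : ℝ => m * |ψ - c| ^ p + |c| ^ p)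
      (p * (|c| ^ (p - 2) * c - m * (|ψ - c| ^ (p - 2) * (ψ - c)))) c := by
  have h := ((hasDerivAt_abs_rpow (ψ - c) hp).comp c ((hasDerivAt_id c).const_sub ψ)).const_mul m
  exact (h.add (hasDerivAt_abs_rpow c hp)).congr_deriv (by ring)

theorem weighted_abs_rpow_lt_of_ne (hp : 1 < p) (hm : 0 < m) {cstar c : ℝ}
    (hcstar : cstar = ψ * m ^ (1 / (p - 1)) / (1 + m ^ (1 / (p - 1)))) (hc : c ≠ cstar) :
    m * |ψ - cstar| ^ p + |cstar| ^ p < m * |ψ - c| ^ p + |c| ^ p := by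
  set r := m ^ (1 / (p - 1)) with hr_def
  have hr : 0 < r := rpow_pos_of_pos hm _
  have hrm : r ^ (p - 1) = m := by
    rw [hr_def, one_div, rpow_inv_rpow hm.le (by linarith)]
  have hcstar_eq : cstar = r * (ψ - cstar) := by
    rw [hcstar]; field_simp; ring
  have hcrit : HasDerivAt (fun c : ℝ => m * |ψ - c| ^ p + |c| ^ p) 0 cstar := by
    convert hasDerivAt_weighted_abs_rpow hp cstar using 1
    rw [hcstar_eq, abs_mul_rpow_sub_two_mul_mul hr, hrm, ← hcstar_eq, sub_self, mul_zero]
  exact (strictConvexOn_weighted_abs_rpow hp hm.le).lt_of_hasDerivAt_eq_zero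
    (mem_univ _) (mem_univ _) hcrit hc

end Weighted

theorem lp_scalar_minimizer_offdiag1 (p ψ : ℝ) (hp : 1 < p) (n : ℕ) (hn : 2 ≤ n)
    (φ : ℝ → ℝ) (hφ : ∀ c, φ c = ((n : ℝ) - 1) * |ψ - c| ^ p + |c| ^ p)
    (cstar : ℝ)
    (hc : cstar = ψ * ((n : ℝ) - 1) ^ (1 / (p - 1)) / (1 + ((n : ℝ) - 1) ^ (1 / (p - 1)))) :
    (∀ c, φ cstar ≤ φ c) ∧ (∀ c, c ≠ cstar → φ cstar < φ c) := by
  have hm : (0 : ℝ) < n - 1 := by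
    have : (2 : ℝ) ≤ n := by exact_mod_cast hn
    linarith
  have hlt : ∀ c, c ≠ cstar → φ cstar < φ c := fun c hne => by
    rw [hφ, hφ]
    exact weighted_abs_rpow_lt_of_ne hp hm hc hne
  refine ⟨fun c => ?_, hlt⟩
  rcases eq_or_ne c cstar with rfl | hne
  · exact le_rfl
  · exact (hlt c hne).le
end

section
/- Let f : [−π, π] → ℝ be continuous, even, with min f > 0. Then for every n, the Toeplitz matrix T_n(f) is symmetric positive definite and its spectral condition number satisfies κ₂(T_n(f)) ≤ (max f)/(min f). -/
open Real
open scoped ComplexOrder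

/-! The quadratic form of `T_n(g)` is `x ↦ (2π)⁻¹ ∫ g θ |∑ₖ xₖ e^{ikθ}|² dθ`, so a symbol that is
nonnegative on `[-π, π]` gives a positive semidefinite matrix, and `T_n` is linear with
`T_n(c) = c • 1`. With `m = min f` and `M = max f`, both `T_n(f) - m • 1` and `M • 1 - T_n(f)` are
therefore positive semidefinite: `T_n(f)` is positive definite and its spectrum lies in `[m, M]`,
so `λ ≤ M = (M / m) m ≤ (M / m) μ` for any two eigenvalues `λ, μ`. -/

open MeasureTheory Matrix ComplexConjugate

theorem intervalIntegral.integral_conj {𝕜 : Type*} [RCLike 𝕜] {f : ℝ → 𝕜} {a b : ℝ}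
    {μ : Measure ℝ} : ∫ x in a..b, conj (f x) ∂μ = conj (∫ x in a..b, f x ∂μ) := by
  simp only [intervalIntegral, _root_.integral_conj, map_sub]

theorem IntervalIntegrable.ofReal {f : ℝ → ℝ} {a b : ℝ} {μ : Measure ℝ}
    (hf : IntervalIntegrable f μ a b) : IntervalIntegrable (fun x => (f x : ℂ)) μ a b :=
  ⟨hf.1.ofReal, hf.2.ofReal⟩

theorem integral_exp_neg_I_mul_int (m : ℤ) :
    ∫ θ in (-π)..π, Complex.exp (-Complex.I * m * θ) = if m = 0 then (2 * π : ℂ) else 0 := by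
  split_ifs with hm
  · simp only [hm, Int.cast_zero, mul_zero, zero_mul, Complex.exp_zero,
      intervalIntegral.integral_const, sub_neg_eq_add, Complex.real_smul, Complex.ofReal_add,
      mul_one]
    ring
  · have hc : -Complex.I * m ≠ 0 := by simp [hm]
    rw [integral_exp_mul_complex hc]
    have h1 : -Complex.I * m * ((π : ℝ) : ℂ) = m * (-(π * Complex.I)) := by ring
    have h2 : -Complex.I * m * ((-π : ℝ) : ℂ) = m * (π * Complex.I) := by push_cast; ring
    rw [h1, h2, Complex.exp_int_mul, Complex.exp_int_mul, Complex.exp_neg, Complex.exp_pi_mul_I]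
    norm_num

theorem normSq_sum_mul_exp {n : ℕ} (x : Fin n → ℂ) (θ : ℝ) :
    (Complex.normSq (∑ k : Fin n, x k * Complex.exp (Complex.I * (k : ℕ) * θ)) : ℂ) =
      ∑ j : Fin n, ∑ k : Fin n, conj (x j) * x k *
        Complex.exp (-Complex.I * (((j : ℕ) : ℤ) - ((k : ℕ) : ℤ)) * θ) := by
  simp only [Complex.normSq_eq_conj_mul_self, map_sum, map_mul, ← Complex.exp_conj,
    Complex.conj_I, map_natCast, Complex.conj_ofReal, Finset.sum_mul_sum]
  refine Finset.sum_congr rfl fun j _ => Finset.sum_congr rfl fun k _ => ?_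
  rw [mul_mul_mul_comm, ← Complex.exp_add]
  push_cast
  ring_nf

namespace Matrix

variable {𝕜 ι : Type*} [RCLike 𝕜] [Fintype ι] [DecidableEq ι] {A : Matrix ι ι 𝕜} {c μ : 𝕜}

theorem le_of_mem_spectrum_of_posSemidef_sub_smul_one (hA : (A - c • 1).PosSemidef)
    (hμ : μ ∈ spectrum 𝕜 A) : c ≤ μ := by
  have : μ - c ∈ spectrum 𝕜 (A - c • 1) := by
    rw [← Algebra.algebraMap_eq_smul_one, ← spectrum.sub_singleton_eq]
    exact Set.sub_mem_sub hμ rfl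
  exact sub_nonneg.1 ((posSemidef_iff_isHermitian_and_spectrum_nonneg.1 hA).2 this)

theorem le_of_mem_spectrum_of_posSemidef_smul_one_sub (hA : (c • 1 - A).PosSemidef)
    (hμ : μ ∈ spectrum 𝕜 A) : μ ≤ c := by
  have : c - μ ∈ spectrum 𝕜 (c • 1 - A) := by
    rw [← Algebra.algebraMap_eq_smul_one, ← spectrum.singleton_sub_eq]
    exact Set.sub_mem_sub rfl hμ
  exact sub_nonneg.1 ((posSemidef_iff_isHermitian_and_spectrum_nonneg.1 hA).2 this)

end Matrix

noncomputable def toeplitz (g : ℝ → ℝ) (n : ℕ) : Matrix (Fin n) (Fin n) ℂ :=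
  Matrix.of fun j k => (1 / (2 * π) : ℂ) *
    ∫ θ in (-π)..π, (g θ : ℂ) * Complex.exp (-Complex.I * (((j : ℕ) : ℤ) - ((k : ℕ) : ℤ)) * θ)

section toeplitz

variable {g h : ℝ → ℝ} {n : ℕ}

theorem toeplitz_isHermitian (g : ℝ → ℝ) (n : ℕ) : (toeplitz g n).IsHermitian := by
  ext j k
  simp only [conjTranspose_apply, toeplitz, of_apply, RCLike.star_def, map_mul,
    ← intervalIntegral.integral_conj, map_div₀, map_one, map_ofNat, Complex.conj_ofReal,
    ← Complex.exp_conj, map_neg, map_sub, Complex.conj_I, map_intCast]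
  congr 2 with θ
  ring_nf

theorem toeplitz_const (c : ℝ) (n : ℕ) : toeplitz (fun _ => c) n = (c : ℂ) • 1 := by
  ext j k
  simp only [toeplitz, of_apply, intervalIntegral.integral_const_mul, ← Int.cast_sub,
    integral_exp_neg_I_mul_int, sub_eq_zero, Nat.cast_inj, Fin.val_inj, Matrix.smul_apply,
    one_apply, smul_eq_mul]
  split_ifs <;> simp [field]

theorem toeplitz_sub (hg : IntervalIntegrable g volume (-π) π)
    (hh : IntervalIntegrable h volume (-π) π) :
    toeplitz (g - h) n = toeplitz g n - toeplitz h n := by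
  ext j k
  have hexp : ContinuousOn (fun θ : ℝ =>
      Complex.exp (-Complex.I * (((j : ℕ) : ℤ) - ((k : ℕ) : ℤ)) * θ)) (Set.uIcc (-π) π) := by
    fun_prop
  simp only [toeplitz, of_apply, Matrix.sub_apply, Pi.sub_apply, Complex.ofReal_sub, sub_mul]
  rw [← mul_sub, intervalIntegral.integral_sub (hg.ofReal.mul_continuousOn hexp)
    (hh.ofReal.mul_continuousOn hexp)]

theorem star_dotProduct_toeplitz_mulVec (hg : IntervalIntegrable g volume (-π) π)
    (x : Fin n → ℂ) :
    star x ⬝ᵥ toeplitz g n *ᵥ x = ((1 / (2 * π) * ∫ θ in (-π)..π, g θ *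
      Complex.normSq (∑ k : Fin n, x k * Complex.exp (Complex.I * (k : ℕ) * θ)) : ℝ) : ℂ) := by
  have hint (j k : Fin n) : IntervalIntegrable (fun θ : ℝ => conj (x j) * x k *
      ((g θ : ℂ) * Complex.exp (-Complex.I * (((j : ℕ) : ℤ) - ((k : ℕ) : ℤ)) * θ)))
      volume (-π) π :=
    (hg.ofReal.mul_continuousOn (by fun_prop)).const_mul _
  calc star x ⬝ᵥ toeplitz g n *ᵥ x
      = 1 / (2 * π) * ∑ j : Fin n, ∑ k : Fin n, ∫ θ in (-π)..π, conj (x j) * x k *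
          ((g θ : ℂ) * Complex.exp (-Complex.I * (((j : ℕ) : ℤ) - ((k : ℕ) : ℤ)) * θ)) := by
        simp only [dotProduct, mulVec, toeplitz, of_apply, Finset.mul_sum,
          intervalIntegral.integral_const_mul, Pi.star_apply, RCLike.star_def]
        refine Finset.sum_congr rfl fun j _ => Finset.sum_congr rfl fun k _ => ?_
        ring
    _ = 1 / (2 * π) * ∫ θ in (-π)..π, ∑ j : Fin n, ∑ k : Fin n, conj (x j) * x k *
          ((g θ : ℂ) * Complex.exp (-Complex.I * (((j : ℕ) : ℤ) - ((k : ℕ) : ℤ)) * θ)) := by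
        rw [intervalIntegral.integral_finsetSum fun j _ => by
          simpa only [Finset.sum_fn] using IntervalIntegrable.sum _ fun k _ => hint j k]
        simp only [intervalIntegral.integral_finsetSum fun k _ => hint _ k]
    _ = 1 / (2 * π) * ∫ θ in (-π)..π, ((g θ * Complex.normSq
          (∑ k : Fin n, x k * Complex.exp (Complex.I * (k : ℕ) * θ)) : ℝ) : ℂ) := by
        simp only [Complex.ofReal_mul, normSq_sum_mul_exp, Finset.mul_sum]
        congr 2 with θ
        refine Finset.sum_congr rfl fun j _ => Finset.sum_congr rfl fun k _ => ?_
        ring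
    _ = _ := by rw [intervalIntegral.integral_ofReal]; push_cast; rfl

theorem toeplitz_posSemidef (hg : IntervalIntegrable g volume (-π) π)
    (hg0 : ∀ θ ∈ Set.Icc (-π) π, 0 ≤ g θ) : (toeplitz g n).PosSemidef := by
  refine .of_dotProduct_mulVec_nonneg (toeplitz_isHermitian g n) fun x => ?_
  rw [star_dotProduct_toeplitz_mulVec hg, Complex.zero_le_real]
  have hπ : -π ≤ π := by linarith [pi_pos]
  exact mul_nonneg (by positivity) <| intervalIntegral.integral_nonneg hπ fun θ hθ =>
    mul_nonneg (hg0 θ hθ) (Complex.normSq_nonneg _)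

theorem toeplitz_sub_smul_one_posSemidef (hg : IntervalIntegrable g volume (-π) π) {c : ℝ}
    (hc : ∀ θ ∈ Set.Icc (-π) π, c ≤ g θ) : (toeplitz g n - (c : ℂ) • 1).PosSemidef := by
  rw [← toeplitz_const, ← toeplitz_sub hg intervalIntegrable_const]
  exact toeplitz_posSemidef (hg.sub intervalIntegrable_const) fun θ hθ => sub_nonneg.2 (hc θ hθ)

theorem smul_one_sub_toeplitz_posSemidef (hg : IntervalIntegrable g volume (-π) π) {c : ℝ}
    (hc : ∀ θ ∈ Set.Icc (-π) π, g θ ≤ c) : ((c : ℂ) • 1 - toeplitz g n).PosSemidef := by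
  rw [← toeplitz_const, ← toeplitz_sub intervalIntegrable_const hg]
  exact toeplitz_posSemidef (intervalIntegrable_const.sub hg) fun θ hθ => sub_nonneg.2 (hc θ hθ)

end toeplitz

theorem toeplitz_posdef_condition_number_general (n : ℕ) (f : ℝ → ℝ)
    (hf : ContinuousOn f (Set.Icc (-π) π))
    (hfpos : 0 < sInf (f '' Set.Icc (-π) π))
    (T : Matrix (Fin n) (Fin n) ℂ)
    (hT : ∀ j k : Fin n, T j k = (1 / (2 * π) : ℂ) *
      ∫ θ in (-π)..π, (f θ : ℂ) * Complex.exp (-Complex.I * (((j : ℕ) : ℤ) - ((k : ℕ) : ℤ)) * θ)) :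
    T.PosDef ∧ (∀ lam ∈ spectrum ℂ T, lam.im = 0) ∧
    ∀ lam ∈ spectrum ℂ T, ∀ mu ∈ spectrum ℂ T,
      lam.re ≤ (sSup (f '' Set.Icc (-π) π) / sInf (f '' Set.Icc (-π) π)) * mu.re := by
  obtain rfl : T = toeplitz f n := Matrix.ext hT
  set m := sInf (f '' Set.Icc (-π) π)
  set M := sSup (f '' Set.Icc (-π) π)
  have hfi : IntervalIntegrable f volume (-π) π :=
    hf.intervalIntegrable_of_Icc (by linarith [pi_pos])
  have hbdd := isCompact_Icc.image_of_continuousOn hf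
  have hlow : (toeplitz f n - (m : ℂ) • 1).PosSemidef :=
    toeplitz_sub_smul_one_posSemidef hfi fun θ hθ => csInf_le hbdd.bddBelow ⟨θ, hθ, rfl⟩
  have hhigh : ((M : ℂ) • 1 - toeplitz f n).PosSemidef :=
    smul_one_sub_toeplitz_posSemidef hfi fun θ hθ => le_csSup hbdd.bddAbove ⟨θ, hθ, rfl⟩
  have hspec (lam) (hlam : lam ∈ spectrum ℂ (toeplitz f n)) :
      lam.im = 0 ∧ m ≤ lam.re ∧ lam.re ≤ M := by
    obtain ⟨hm, him⟩ := Complex.le_def.1 (le_of_mem_spectrum_of_posSemidef_sub_smul_one hlow hlam)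
    obtain ⟨hM, -⟩ := Complex.le_def.1 (le_of_mem_spectrum_of_posSemidef_smul_one_sub hhigh hlam)
    exact ⟨by simpa using him.symm, by simpa using hm, by simpa using hM⟩
  refine ⟨?_, fun lam hlam => (hspec lam hlam).1, fun lam hlam mu hmu => ?_⟩
  · simpa using PosDef.posSemidef_add hlow (PosDef.one.smul (Complex.zero_lt_real.2 hfpos))
  obtain ⟨-, -, hlamM⟩ := hspec lam hlam
  obtain ⟨-, hmum, hmuM⟩ := hspec mu hmu
  calc lam.re ≤ M := hlamM
    _ = M / m * m := (div_mul_cancel₀ M hfpos.ne').symm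
    _ ≤ M / m * mu.re :=
      mul_le_mul_of_nonneg_left hmum (div_nonneg (hfpos.le.trans (hmum.trans hmuM)) hfpos.le)

theorem toeplitz_posdef_condition_number (n : ℕ) (hn : 0 < n) (f : ℝ → ℝ)
    (hf : ContinuousOn f (Set.Icc (-π) π)) (hfe : ∀ θ, f (-θ) = f θ)
    (hfpos : 0 < sInf (f '' Set.Icc (-π) π))
    (T : Matrix (Fin n) (Fin n) ℂ)
    (hT : ∀ j k : Fin n, T j k = (1 / (2 * π) : ℂ) *
      ∫ θ in (-π)..π, (f θ : ℂ) * Complex.exp (-Complex.I * (((j : ℕ) : ℤ) - ((k : ℕ) : ℤ)) * θ)) :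
    T.PosDef ∧ (∀ lam ∈ spectrum ℂ T, lam.im = 0) ∧
    ∀ lam ∈ spectrum ℂ T, ∀ mu ∈ spectrum ℂ T,
      lam.re ≤ (sSup (f '' Set.Icc (-π) π) / sInf (f '' Set.Icc (-π) π)) * mu.re :=
  toeplitz_posdef_condition_number_general n f hf hfpos T hT
end
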